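/- arXiv:2311.07977 — 3 statements merged into one kernel-verified Lean document; each statement's English description precedes it below -/
import Mathlib

section
/- Define g(δ) = cos²δ / (sin δ (1 − 2 sin δ)) for δ ∈ (0, π/6). Then g attains its minimum value 2(√3 + 2) at δ₀ = 2·arctan(2 + √3 − √(6 + 4√3)). -/
open Real

noncomputable def g5 (δ : ℝ) : ℝ :=
  (Real.cos δ) ^ 2 / (Real.sin δ * (1 - 2 * Real.sin δ))

noncomputable def δ₀ : ℝ :=
  2 * Real.arctan (2 + Real.sqrt 3 - Real.sqrt (6 + 4 * Real.sqrt 3))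

/-!
With `s = sin δ ∈ (0, 1/2)` one has the identity
`1 - s² - 2(√3 + 2) s (1 - 2s) = ((2 + √3) s - 1)²`,
so `g5 δ - 2(√3 + 2)` is a square divided by a positive number, vanishing exactly when
`sin δ = (2 + √3)⁻¹`. The half-angle tangent of `δ₀` is the smaller root of
`t² - 2(2 + √3) t + 1 = 0`, hence `sin δ₀ = 2t / (1 + t²) = (2 + √3)⁻¹`, i.e.
`δ₀ = arcsin (2 + √3)⁻¹`.
-/

lemma sub_sqrt_sq_sub_one_mem_Ioc {b : ℝ} (hb : 1 ≤ b) : b - √(b ^ 2 - 1) ∈ Set.Ioc 0 1 := by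
  constructor
  · have : √(b ^ 2 - 1) < b := (sqrt_lt' (by linarith)).2 (by linarith)
    linarith
  · have : b - 1 ≤ √(b ^ 2 - 1) := (le_sqrt (by linarith) (by nlinarith)).2 (by nlinarith)
    linarith

lemma one_add_sub_sqrt_sq_sub_one_sq {b : ℝ} (hb : 1 ≤ b) :
    1 + (b - √(b ^ 2 - 1)) ^ 2 = 2 * b * (b - √(b ^ 2 - 1)) := by
  have h : √(b ^ 2 - 1) ^ 2 = b ^ 2 - 1 := sq_sqrt (by nlinarith)
  linear_combination h

lemma sin_two_mul_arctan (x : ℝ) : sin (2 * arctan x) = 2 * x / (1 + x ^ 2) := by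
  rw [sin_eq_two_mul_tan_half_div_one_add_tan_half_sq, mul_div_cancel_left₀ _ two_ne_zero,
    tan_arctan]

lemma two_mul_arctan_sub_sqrt_sq_sub_one {b : ℝ} (hb : 1 ≤ b) :
    2 * arctan (b - √(b ^ 2 - 1)) = arcsin b⁻¹ := by
  obtain ⟨ht0, ht1⟩ := sub_sqrt_sq_sub_one_mem_Ioc hb
  symm
  apply arcsin_eq_of_sin_eq
  · rw [sin_two_mul_arctan, one_add_sub_sqrt_sq_sub_one_sq hb]
    field_simp
  · have h0 : 0 < arctan (b - √(b ^ 2 - 1)) := arctan_pos.2 ht0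
    have h1 : arctan (b - √(b ^ 2 - 1)) ≤ π / 4 := arctan_one ▸ arctan_le_arctan_iff.2 ht1
    constructor <;> linarith [pi_pos]

lemma δ₀_eq_arcsin : δ₀ = arcsin (2 + √3)⁻¹ := by
  have hsq : (2 + √3) ^ 2 - 1 = 6 + 4 * √3 := by
    linear_combination sq_sqrt (show (0 : ℝ) ≤ 3 by norm_num)
  rw [δ₀, ← two_mul_arctan_sub_sqrt_sq_sub_one (by linarith [sqrt_nonneg 3]), hsq]

lemma inv_two_add_sqrt_three_mem_Ioo : (2 + √3)⁻¹ ∈ Set.Ioo (0 : ℝ) (1 / 2) := by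
  constructor
  · positivity
  · rw [one_div]
    exact inv_strictAnti₀ two_pos (by linarith [sqrt_pos.2 (show (0 : ℝ) < 3 by norm_num)])

lemma δ₀_mem_Ioo : δ₀ ∈ Set.Ioo (0 : ℝ) (π / 6) := by
  obtain ⟨h0, h1⟩ := inv_two_add_sqrt_three_mem_Ioo
  have harcsin : arcsin (1 / 2) = π / 6 :=
    arcsin_eq_of_sin_eq sin_pi_div_six ⟨by linarith [pi_pos], by linarith [pi_pos]⟩
  rw [δ₀_eq_arcsin]
  exact ⟨arcsin_pos.2 h0, harcsin ▸ arcsin_lt_arcsin (by linarith) h1 (by norm_num)⟩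

lemma sin_δ₀ : sin δ₀ = (2 + √3)⁻¹ := by
  obtain ⟨h0, h1⟩ := inv_two_add_sqrt_three_mem_Ioo
  rw [δ₀_eq_arcsin, sin_arcsin (by linarith) (by linarith)]

lemma sin_mem_Ioo_of_mem_Ioo {δ : ℝ} (h : δ ∈ Set.Ioo (0 : ℝ) (π / 6)) :
    sin δ ∈ Set.Ioo (0 : ℝ) (1 / 2) := by
  obtain ⟨h0, h1⟩ := h
  refine ⟨sin_pos_of_pos_of_lt_pi h0 (by linarith [pi_pos]), ?_⟩
  rw [← sin_pi_div_six]
  exact sin_lt_sin_of_lt_of_le_pi_div_two (by linarith [pi_pos]) (by linarith [pi_pos]) h1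

lemma one_sub_sq_sub_mul_eq_sq (s : ℝ) :
    1 - s ^ 2 - 2 * (√3 + 2) * (s * (1 - 2 * s)) = ((2 + √3) * s - 1) ^ 2 := by
  linear_combination (-s ^ 2) * sq_sqrt (show (0 : ℝ) ≤ 3 by norm_num)

lemma g5_eq {δ : ℝ} (h : sin δ * (1 - 2 * sin δ) ≠ 0) :
    g5 δ = 2 * (√3 + 2) + ((2 + √3) * sin δ - 1) ^ 2 / (sin δ * (1 - 2 * sin δ)) := by
  rw [g5, cos_sq', ← one_sub_sq_sub_mul_eq_sq, sub_div (1 - sin δ ^ 2), mul_div_cancel_right₀ _ h,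
    add_sub_cancel]

theorem stmt_5 :
    (∀ δ ∈ Set.Ioo (0 : ℝ) (π / 6), 2 * (Real.sqrt 3 + 2) ≤ g5 δ) ∧
    δ₀ ∈ Set.Ioo (0 : ℝ) (π / 6) ∧
    g5 δ₀ = 2 * (Real.sqrt 3 + 2) := by
  have hden {δ : ℝ} (h : δ ∈ Set.Ioo (0 : ℝ) (π / 6)) : 0 < sin δ * (1 - 2 * sin δ) := by
    obtain ⟨h0, h1⟩ := sin_mem_Ioo_of_mem_Ioo h
    exact mul_pos h0 (by linarith)
  refine ⟨fun δ hδ => ?_, δ₀_mem_Ioo, ?_⟩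
  · rw [g5_eq (hden hδ).ne']
    exact le_add_of_nonneg_right (div_nonneg (sq_nonneg _) (hden hδ).le)
  · have hroot : (2 + √3) * sin δ₀ - 1 = 0 := by
      rw [sin_δ₀, mul_inv_cancel₀ (by positivity), sub_self]
    rw [g5_eq (hden δ₀_mem_Ioo).ne', hroot]
    simp
end

section
/- Fix k ≥ 2, δ ∈ (0, arcsin(2^{1−k})), ε > 0, and s₁ > 0. Define recursively s_l = (1+ε) · 2^{l−1} cos²δ (1 − ∏_{j=1}^{l−1}(1 − s_j/2)) / (sin δ (1 − 2^{l−1} sin δ)) for 2 ≤ l ≤ k, assuming each s_j < 2 along the way. Then the sequence is strictly increasing: s_k > s_{k−1} > ⋯ > s₁. -/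
/-!
Write `P m = ∏_{j ≤ m} (1 - s_j / 2)`. Since every `s_j` lies in `(0, 2)`, the products `P m`
decrease strictly and stay in `(0, 1)`, so the factors `1 - P m` increase strictly. Passing from
`s_l` to `s_{l+1}` for `l ≥ 2` therefore doubles `2^{l-1}`, increases `1 - P`, and decreases the
positive denominator `1 - 2^{l-1} sin δ`, so `s_{l+1} > 2 s_l > s_l`. The first step is separate:
`s_2 = (1 + ε) cos² δ s_1 / (sin δ (1 - 2 sin δ))`, and `sin δ (1 - 2 sin δ) < cos² δ` because
their difference is `1 - sin δ + sin² δ > 0`.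
-/

open Real Finset

lemma sin_pos_lt_and_cos_pos_of_mem_Ioo_arcsin {δ x : ℝ} (hδ : δ ∈ Set.Ioo 0 (arcsin x)) :
    0 < sin δ ∧ sin δ < x ∧ 0 < cos δ := by
  obtain ⟨h0, hx⟩ := hδ
  have hπ : δ < π / 2 := hx.trans_le (arcsin_le_pi_div_two x)
  refine ⟨sin_pos_of_pos_of_lt_pi h0 (by linarith [pi_pos]), ?_,
    cos_pos_of_mem_Ioo ⟨by linarith [pi_pos], hπ⟩⟩
  exact (lt_arcsin_iff_sin_lt' ⟨by linarith [pi_pos], hπ⟩).1 hx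

lemma sin_mul_one_sub_two_sin_lt_cos_sq (δ : ℝ) : sin δ * (1 - 2 * sin δ) < cos δ ^ 2 := by
  nlinarith [sin_sq_add_cos_sq δ, sq_nonneg (sin δ - 1 / 2)]

lemma two_pow_mul_lt_one_of_le {t : ℝ} {m n : ℕ} (ht : 0 ≤ t) (hmn : m ≤ n)
    (h : 2 ^ n * t < 1) : 2 ^ m * t < 1 :=
  lt_of_le_of_lt (mul_le_mul_of_nonneg_right (pow_le_pow_right₀ one_le_two hmn) ht) h

section PartialProduct

variable {s : ℕ → ℝ} {m : ℕ}

lemma prod_one_sub_half_pos (hs : ∀ j ∈ Icc 1 m, s j < 2) :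
    0 < ∏ j ∈ Icc 1 m, (1 - s j / 2) :=
  prod_pos fun j hj => by linarith [hs j hj]

lemma prod_one_sub_half_succ_lt (hP : 0 < ∏ j ∈ Icc 1 m, (1 - s j / 2)) (hs : 0 < s (m + 1)) :
    ∏ j ∈ Icc 1 (m + 1), (1 - s j / 2) < ∏ j ∈ Icc 1 m, (1 - s j / 2) := by
  rw [prod_Icc_succ_top (by omega)]
  nlinarith

lemma prod_one_sub_half_lt_one (hm : 1 ≤ m) (hs : ∀ j ∈ Icc 1 m, 0 < s j ∧ s j < 2) :
    ∏ j ∈ Icc 1 m, (1 - s j / 2) < 1 := by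
  obtain ⟨n, rfl⟩ : ∃ n, m = n + 1 := ⟨m - 1, by omega⟩
  have hs' : ∀ j ∈ Icc 1 n, 0 < s j ∧ s j < 2 := fun j hj =>
    hs j (Icc_subset_Icc_right n.le_succ hj)
  calc ∏ j ∈ Icc 1 (n + 1), (1 - s j / 2)
      < ∏ j ∈ Icc 1 n, (1 - s j / 2) :=
        prod_one_sub_half_succ_lt (prod_one_sub_half_pos fun j hj => (hs' j hj).2)
          (hs (n + 1) (by simp)).1
    _ ≤ 1 := prod_le_one (fun j hj => by linarith [hs' j hj]) fun j hj => by linarith [hs' j hj]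

end PartialProduct

lemma recurrence_term_lt_succ {a c t P Q : ℝ} {n : ℕ} (ha : 0 < a) (hc : 0 < c) (ht : 0 < t)
    (hnt : 2 ^ (n + 1) * t < 1) (hQP : Q < P) (hP : P < 1) :
    a * 2 ^ n * c ^ 2 * (1 - P) / (t * (1 - 2 ^ n * t)) <
      a * 2 ^ (n + 1) * c ^ 2 * (1 - Q) / (t * (1 - 2 ^ (n + 1) * t)) := by
  have hle : (2 : ℝ) ^ n * t ≤ 2 ^ (n + 1) * t := by gcongr <;> norm_num
  have hden : 0 < t * (1 - 2 ^ (n + 1) * t) := mul_pos ht (by linarith)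
  calc a * 2 ^ n * c ^ 2 * (1 - P) / (t * (1 - 2 ^ n * t))
      ≤ a * 2 ^ n * c ^ 2 * (1 - P) / (t * (1 - 2 ^ (n + 1) * t)) := by
        gcongr
    _ < a * 2 ^ (n + 1) * c ^ 2 * (1 - Q) / (t * (1 - 2 ^ (n + 1) * t)) := by
        refine (div_lt_div_iff_of_pos_right hden).2 ?_
        have : 0 < a * 2 ^ n * c ^ 2 := by positivity
        have hPQ : 1 - P < 2 * (1 - Q) := by linarith
        rw [pow_succ (2 : ℝ) n]
        nlinarith [mul_lt_mul_of_pos_left hPQ this]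

def SatisfiesRecurrence (k : ℕ) (a c t : ℝ) (s : ℕ → ℝ) : Prop :=
  ∀ l, 2 ≤ l → l ≤ k →
    s l = a * 2 ^ (l - 1) * c ^ 2 * (1 - ∏ j ∈ Icc 1 (l - 1), (1 - s j / 2)) /
      (t * (1 - 2 ^ (l - 1) * t))

namespace SatisfiesRecurrence

variable {k : ℕ} {a c t : ℝ} {s : ℕ → ℝ}

lemma pos (hrec : SatisfiesRecurrence k a c t s) (ha : 0 < a) (hc : 0 < c) (ht : 0 < t)
    (hkt : 2 ^ (k - 1) * t < 1) (hs1 : 0 < s 1) (hlt : ∀ j ∈ Icc 1 k, s j < 2) :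
    ∀ l ∈ Icc 1 k, 0 < s l := by
  suffices h : ∀ n, 1 ≤ n → n ≤ k → ∀ l ∈ Icc 1 n, 0 < s l from
    fun l hl => h k ((mem_Icc.1 hl).1.trans (mem_Icc.1 hl).2) le_rfl l hl
  intro n hn
  induction n, hn using Nat.le_induction with
  | base => intro _ l hl; rwa [(by simpa using hl : l = 1)]
  | succ n hn ih =>
    intro hnk l hl
    rcases (mem_Icc.1 hl).2.lt_or_eq with hl' | rfl
    · exact ih (by omega) l (mem_Icc.2 ⟨(mem_Icc.1 hl).1, by omega⟩)
    have hP : ∏ j ∈ Icc 1 n, (1 - s j / 2) < 1 := prod_one_sub_half_lt_one hn fun j hj =>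
      ⟨ih (by omega) j hj, hlt j (Icc_subset_Icc_right (by omega) hj)⟩
    have hnt : 2 ^ n * t < 1 := two_pow_mul_lt_one_of_le ht.le (by omega) hkt
    rw [hrec (n + 1) (by omega) hnk, Nat.add_sub_cancel]
    exact div_pos (by nlinarith [mul_pos (mul_pos ha (pow_pos two_pos n)) (pow_pos hc 2)])
      (mul_pos ht (by linarith))

lemma pred_lt (hrec : SatisfiesRecurrence k a c t s) (ha : 0 < a) (hc : 0 < c) (ht : 0 < t)
    (hkt : 2 ^ (k - 1) * t < 1) (hbase : t * (1 - 2 * t) < a * c ^ 2) (hs1 : 0 < s 1)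
    (hlt : ∀ j ∈ Icc 1 k, s j < 2) :
    ∀ l, 2 ≤ l → l ≤ k → s (l - 1) < s l := by
  have hpos := hrec.pos ha hc ht hkt hs1 hlt
  intro l hl hlk
  obtain ⟨m, rfl⟩ : ∃ m, l = m + 2 := ⟨l - 2, by omega⟩
  rcases m with _ | n
  · have h2t : 0 < t * (1 - 2 * t) :=
      mul_pos ht (by linarith [two_pow_mul_lt_one_of_le (m := 1) ht.le (by omega) hkt])
    rw [hrec 2 le_rfl hlk]
    simp only [Nat.reduceAdd, Nat.reduceSub, Icc_self, prod_singleton, pow_one, sub_sub_cancel]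
    rw [lt_div_iff₀ h2t]
    nlinarith [mul_lt_mul_of_pos_left hbase hs1]
  · have hPpos : 0 < ∏ j ∈ Icc 1 (n + 1), (1 - s j / 2) :=
      prod_one_sub_half_pos fun j hj => hlt j (Icc_subset_Icc_right (by omega) hj)
    have hnt : 2 ^ (n + 2) * t < 1 := two_pow_mul_lt_one_of_le ht.le (by omega) hkt
    rw [show n + 1 + 2 - 1 = n + 2 by omega, hrec (n + 1 + 2) (by omega) hlk,
      hrec (n + 2) (by omega) (by omega)]
    simp only [show n + 1 + 2 - 1 = n + 2 by omega]
    exact recurrence_term_lt_succ ha hc ht hnt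
      (prod_one_sub_half_succ_lt hPpos (hpos (n + 2) (mem_Icc.2 ⟨by omega, by omega⟩)))
      (prod_one_sub_half_lt_one (by omega) fun j hj =>
        ⟨hpos j (Icc_subset_Icc_right (by omega) hj), hlt j (Icc_subset_Icc_right (by omega) hj)⟩)

end SatisfiesRecurrence

theorem stmt_8_general (k : ℕ) (δ : ℝ)
    (hδ : δ ∈ Set.Ioo (0 : ℝ) (Real.arcsin (1 / 2 ^ (k - 1))))
    (ε : ℝ) (hε : 0 < ε) (s : ℕ → ℝ) (hs1 : 0 < s 1)
    (hlt : ∀ j ∈ Finset.Icc 1 k, s j < 2)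
    (hrec : ∀ l, 2 ≤ l → l ≤ k →
      s l = (1 + ε) * 2 ^ (l - 1) * (Real.cos δ) ^ 2 *
        (1 - ∏ j ∈ Finset.Icc 1 (l - 1), (1 - s j / 2)) /
        (Real.sin δ * (1 - 2 ^ (l - 1) * Real.sin δ))) :
    ∀ l, 2 ≤ l → l ≤ k → s (l - 1) < s l := by
  obtain ⟨hsin, hsin_lt, hcos⟩ := sin_pos_lt_and_cos_pos_of_mem_Ioo_arcsin hδ
  have hkt : 2 ^ (k - 1) * sin δ < 1 := (lt_div_iff₀' (by positivity)).1 hsin_lt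
  have hbase : sin δ * (1 - 2 * sin δ) < (1 + ε) * cos δ ^ 2 :=
    (sin_mul_one_sub_two_sin_lt_cos_sq δ).trans_le
      (le_mul_of_one_le_left (sq_nonneg _) (by linarith))
  exact SatisfiesRecurrence.pred_lt hrec (by linarith) hcos hsin hkt hbase hs1 hlt

theorem stmt_8 (k : ℕ) (hk : 2 ≤ k) (δ : ℝ)
    (hδ : δ ∈ Set.Ioo (0 : ℝ) (Real.arcsin (1 / 2 ^ (k - 1))))
    (ε : ℝ) (hε : 0 < ε) (s : ℕ → ℝ) (hs1 : 0 < s 1)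
    (hlt : ∀ j ∈ Finset.Icc 1 k, s j < 2)
    (hrec : ∀ l, 2 ≤ l → l ≤ k →
      s l = (1 + ε) * 2 ^ (l - 1) * (Real.cos δ) ^ 2 *
        (1 - ∏ j ∈ Finset.Icc 1 (l - 1), (1 - s j / 2)) /
        (Real.sin δ * (1 - 2 ^ (l - 1) * Real.sin δ))) :
    ∀ l, 2 ≤ l → l ≤ k → s (l - 1) < s l :=
  stmt_8_general k δ hδ ε hε s hs1 hlt hrec
end

section
/- For every k ≥ 2 there exist δ ∈ (0, arcsin(2^{1−k})) and a finite sequence α₁, …, α_k with 0 < α_l ≤ 1 for all l, α₁ > 0, and for each 2 ≤ l ≤ k: α_l > 2^{l−1} cos²δ (1 − ∏_{j=1}^{l−1}(1 − α_j/2)) / (sin δ (1 − 2^{l−1} sin δ)) > 0. -/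
/-! Choose any `δ ∈ (0, arcsin 2^{1-k})`; then `2^{l-1} sin δ < 1` for `l ≤ k`, so every coefficient
`C_l = 2^{l-1} cos²δ / (sin δ (1 - 2^{l-1} sin δ))` is positive, and the constraints read
`α_l > C_l (1 - ∏_{j<l} (1 - α_j/2))`. By the Weierstrass product inequality the right-hand side is
at most `C_l (l-1) α_{l-1} / 2` for increasing `α`, so the geometric sequence `α_l = R^{l-k}` ending
at `α_k = 1` works once the ratio `R` exceeds `k/2 · max C_l`. -/

open Real Finset

theorem one_sub_sum_le_prod_one_sub {ι R : Type*}
    [CommRing R] [LinearOrder R] [IsStrictOrderedRing R]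
    (s : Finset ι) (f : ι → R) (h0 : ∀ i ∈ s, 0 ≤ f i) (h1 : ∀ i ∈ s, f i ≤ 1) :
    1 - ∑ i ∈ s, f i ≤ ∏ i ∈ s, (1 - f i) := by
  classical
  induction s using Finset.induction with
  | empty => simp
  | @insert a s ha ih =>
    rw [sum_insert ha, prod_insert ha]
    have ih := ih (fun i hi => h0 i (mem_insert_of_mem hi))
      (fun i hi => h1 i (mem_insert_of_mem hi))
    have ha0 := h0 a (mem_insert_self a s)
    have ha1 := h1 a (mem_insert_self a s)
    have hsum : 0 ≤ ∑ i ∈ s, f i := sum_nonneg fun i hi => h0 i (mem_insert_of_mem hi)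
    nlinarith [mul_le_mul_of_nonneg_left ih (sub_nonneg.2 ha1)]

theorem prod_one_sub_lt_one {ι R : Type*} [CommRing R] [LinearOrder R] [IsStrictOrderedRing R]
    {s : Finset ι} (hs : s.Nonempty) {f : ι → R} (h0 : ∀ i ∈ s, 0 < f i) (h1 : ∀ i ∈ s, f i < 1) :
    ∏ i ∈ s, (1 - f i) < 1 :=
  calc ∏ i ∈ s, (1 - f i) < ∏ _i ∈ s, (1 : R) :=
        prod_lt_prod_of_nonempty (fun i hi => sub_pos.2 (h1 i hi))
          (fun i hi => sub_lt_self 1 (h0 i hi)) hs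
    _ = 1 := prod_const_one

theorem one_sub_prod_one_sub_half_le {α : ℕ → ℝ} {m : ℕ} (h0 : ∀ j ∈ Icc 1 m, 0 ≤ α j)
    (h2 : ∀ j ∈ Icc 1 m, α j ≤ 2) (hmono : ∀ j ∈ Icc 1 m, α j ≤ α m) :
    1 - ∏ j ∈ Icc 1 m, (1 - α j / 2) ≤ m * (α m / 2) :=
  calc 1 - ∏ j ∈ Icc 1 m, (1 - α j / 2) ≤ ∑ j ∈ Icc 1 m, α j / 2 :=
        sub_le_comm.1 <| one_sub_sum_le_prod_one_sub _ _
          (fun j hj => by linarith [h0 j hj]) (fun j hj => by linarith [h2 j hj])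
    _ ≤ #(Icc 1 m) • (α m / 2) := sum_le_card_nsmul _ _ _ fun j hj => by linarith [hmono j hj]
    _ = m * (α m / 2) := by rw [Nat.card_Icc, Nat.add_sub_cancel, nsmul_eq_mul]

theorem exists_gt_mul_one_sub_prod_one_sub_half (k : ℕ) (C : ℕ → ℝ)
    (hC : ∀ l, 2 ≤ l → l ≤ k → 0 < C l) :
    ∃ α : ℕ → ℝ, (∀ l, 1 ≤ l → l ≤ k → 0 < α l ∧ α l ≤ 1) ∧
      ∀ l, 2 ≤ l → l ≤ k →
        α l > C l * (1 - ∏ j ∈ Icc 1 (l - 1), (1 - α j / 2)) ∧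
        C l * (1 - ∏ j ∈ Icc 1 (l - 1), (1 - α j / 2)) > 0 := by
  set B := ∑ l ∈ Icc 2 k, C l
  have hCB : ∀ l, 2 ≤ l → l ≤ k → C l ≤ B := fun l hl hlk =>
    single_le_sum (fun i hi => (hC i (mem_Icc.1 hi).1 (mem_Icc.1 hi).2).le) (mem_Icc.2 ⟨hl, hlk⟩)
  have hB : 0 ≤ B := sum_nonneg fun i hi => (hC i (mem_Icc.1 hi).1 (mem_Icc.1 hi).2).le
  set R : ℝ := 1 + B * k
  have hR : 1 ≤ R := le_add_of_nonneg_right (by positivity)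
  have hR0 : 0 < R := by linarith
  set α : ℕ → ℝ := fun l => R ^ l / R ^ k
  have hα0 : ∀ l, 0 < α l := fun l => by positivity
  have hα1 : ∀ l ≤ k, α l ≤ 1 := fun l hl =>
    div_le_one_of_le₀ (pow_le_pow_right₀ hR hl) (by positivity)
  have hmono : ∀ i j, i ≤ j → α i ≤ α j := fun i j hij =>
    div_le_div_of_nonneg_right (pow_le_pow_right₀ hR hij) (by positivity)
  have hstep : ∀ m, α (m + 1) = R * α m := fun m => by simp only [α, pow_succ]; ring
  refine ⟨α, fun l _ hlk => ⟨hα0 l, hα1 l hlk⟩, fun l hl hlk => ?_⟩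
  obtain ⟨m, rfl⟩ : ∃ m, l = m + 1 := ⟨l - 1, by omega⟩
  rw [Nat.add_sub_cancel]
  have hP : 0 < 1 - ∏ j ∈ Icc 1 m, (1 - α j / 2) :=
    sub_pos.2 <| prod_one_sub_lt_one (s := Icc 1 m) ⟨m, mem_Icc.2 ⟨by omega, le_rfl⟩⟩
      (fun j _ => by linarith [hα0 j]) (fun j hj => by linarith [hα1 j (by grind)])
  have hle := one_sub_prod_one_sub_half_le (fun j _ => (hα0 j).le)
    (fun j hj => by linarith [hα1 j (by grind)]) (fun j hj => hmono j m (mem_Icc.1 hj).2)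
  refine ⟨?_, mul_pos (hC _ hl hlk) hP⟩
  have hmk : (m : ℝ) ≤ k := by exact_mod_cast (by omega : m ≤ k)
  calc C (m + 1) * (1 - ∏ j ∈ Icc 1 m, (1 - α j / 2)) ≤ B * (m * (α m / 2)) :=
        mul_le_mul (hCB _ hl hlk) hle hP.le hB
    _ ≤ B * k * α m := by nlinarith [mul_nonneg hB (hα0 m).le]
    _ < R * α m := mul_lt_mul_of_pos_right (lt_one_add _) (hα0 m)
    _ = α (m + 1) := (hstep m).symm

theorem sin_pos_and_sin_lt_and_cos_pos_of_mem_Ioo_arcsin {δ y : ℝ} (h : δ ∈ Set.Ioo 0 (arcsin y)) :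
    0 < sin δ ∧ sin δ < y ∧ 0 < cos δ := by
  have hδ : δ < π / 2 := h.2.trans_le (arcsin_le_pi_div_two y)
  refine ⟨sin_pos_of_pos_of_lt_pi h.1 (by linarith [pi_pos]),
    (lt_arcsin_iff_sin_lt' ⟨by linarith [pi_pos, h.1], hδ⟩).1 h.2,
    cos_pos_of_mem_Ioo ⟨by linarith [pi_pos, h.1], hδ⟩⟩

theorem stmt_10_general (k : ℕ) :
    ∃ δ ∈ Set.Ioo (0 : ℝ) (Real.arcsin (1 / 2 ^ (k - 1))),
      ∃ α : ℕ → ℝ,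
        (∀ l, 1 ≤ l → l ≤ k → 0 < α l ∧ α l ≤ 1) ∧
        (∀ l, 2 ≤ l → l ≤ k →
          α l > 2 ^ (l - 1) * (Real.cos δ) ^ 2 *
              (1 - ∏ j ∈ Finset.Icc 1 (l - 1), (1 - α j / 2)) /
              (Real.sin δ * (1 - 2 ^ (l - 1) * Real.sin δ)) ∧
          2 ^ (l - 1) * (Real.cos δ) ^ 2 *
              (1 - ∏ j ∈ Finset.Icc 1 (l - 1), (1 - α j / 2)) /
              (Real.sin δ * (1 - 2 ^ (l - 1) * Real.sin δ)) > 0) := by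
  obtain ⟨δ, hδ⟩ := exists_between (arcsin_pos.2 (by positivity : (0 : ℝ) < 1 / 2 ^ (k - 1)))
  obtain ⟨hsin, hsin_lt, hcos⟩ := sin_pos_and_sin_lt_and_cos_pos_of_mem_Ioo_arcsin hδ
  have hC : ∀ l, 2 ≤ l → l ≤ k →
      0 < 2 ^ (l - 1) * cos δ ^ 2 / (sin δ * (1 - 2 ^ (l - 1) * sin δ)) := by
    intro l _ hlk
    have hks : (2 : ℝ) ^ (k - 1) * sin δ < 1 := (lt_div_iff₀' (by positivity)).1 hsin_lt
    have hls : (2 : ℝ) ^ (l - 1) * sin δ ≤ 2 ^ (k - 1) * sin δ :=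
      mul_le_mul_of_nonneg_right (pow_le_pow_right₀ one_le_two (by omega)) hsin.le
    have : 0 < 1 - 2 ^ (l - 1) * sin δ := by linarith
    positivity
  obtain ⟨α, hα, hgt⟩ := exists_gt_mul_one_sub_prod_one_sub_half k _ hC
  refine ⟨δ, hδ, α, hα, fun l hl hlk => ?_⟩
  simpa only [mul_div_right_comm _ (1 - ∏ j ∈ Icc 1 (l - 1), (1 - α j / 2))] using hgt l hl hlk

theorem stmt_10 (k : ℕ) (hk : 2 ≤ k) :
    ∃ δ ∈ Set.Ioo (0 : ℝ) (Real.arcsin (1 / 2 ^ (k - 1))),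
      ∃ α : ℕ → ℝ,
        (∀ l, 1 ≤ l → l ≤ k → 0 < α l ∧ α l ≤ 1) ∧
        (∀ l, 2 ≤ l → l ≤ k →
          α l > 2 ^ (l - 1) * (Real.cos δ) ^ 2 *
              (1 - ∏ j ∈ Finset.Icc 1 (l - 1), (1 - α j / 2)) /
              (Real.sin δ * (1 - 2 ^ (l - 1) * Real.sin δ)) ∧
          2 ^ (l - 1) * (Real.cos δ) ^ 2 *
              (1 - ∏ j ∈ Finset.Icc 1 (l - 1), (1 - α j / 2)) /
              (Real.sin δ * (1 - 2 ^ (l - 1) * Real.sin δ)) > 0) :=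
  stmt_10_general k
end
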